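/- For every integer n ≥ 2, δ(n+2,2) = δ(n+1,2) + δ(n,2); that is, the sequence n ↦ δ(n,2) satisfies the Fibonacci recurrence. -/

import Mathlib

/-- The integer encoded (in binary, most significant digit first) by the `i`-th row
of the binary matrix `A`, i.e. `x_i = ∑_j a_{ij} 2^{m-j}` (1-indexed). -/
def rowVal {n m : ℕ} (A : Fin n → Fin m → Fin 2) (i : Fin n) : ℕ :=
  ∑ j : Fin m, (A i j : ℕ) * 2 ^ (m - 1 - (j : ℕ))

/-- The integer encoded by the `j`-th column of `A`, i.e. `y_j = ∑_i a_{ij} 2^{n-i}`. -/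
def colVal {n m : ℕ} (A : Fin n → Fin m → Fin 2) (j : Fin m) : ℕ :=
  ∑ i : Fin n, (A i j : ℕ) * 2 ^ (n - 1 - (i : ℕ))

/-- `A ∈ 𝔠_{n×m}`: rows and columns sorted in lexicographically nondecreasing order. -/
def memC {n m : ℕ} (A : Fin n → Fin m → Fin 2) : Prop :=
  Monotone (rowVal A) ∧ Monotone (colVal A)

/-- `A ∈ 𝔡_{n×m}`: rows and columns sorted in lexicographically nonincreasing order. -/
def memD {n m : ℕ} (A : Fin n → Fin m → Fin 2) : Prop :=
  Antitone (rowVal A) ∧ Antitone (colVal A)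

/-- `Λ_n^k`: n×n binary matrices with exactly `k` ones in each row and each column. -/
def lambdaSet (n k : ℕ) : Set (Fin n → Fin n → Fin 2) :=
  {A | (∀ i, ∑ j, (A i j : ℕ) = k) ∧ (∀ j, ∑ i, (A i j : ℕ) = k)}

/-- `Γ_n^k = 𝔠_{n×n} ∩ Λ_n^k`. -/
def GammaSet (n k : ℕ) : Set (Fin n → Fin n → Fin 2) :=
  {A | memC A} ∩ lambdaSet n k

/-- `Δ_n^k = 𝔡_{n×n} ∩ Λ_n^k`. -/
def DeltaSet (n k : ℕ) : Set (Fin n → Fin n → Fin 2) :=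
  {A | memD A} ∩ lambdaSet n k

/-- `γ(n,k) = |Γ_n^k|`. -/
noncomputable def gammaCard (n k : ℕ) : ℕ := (GammaSet n k).ncard

/-- `δ(n,k) = |Δ_n^k|`. -/
noncomputable def deltaCard (n k : ℕ) : ℕ := (DeltaSet n k).ncard


/-!
The first row of a matrix with sorted columns is sorted, since it consists of the leading binary
digits of the column values; a sorted 0/1 row with `k` ones is `1 ⋯ 1 0 ⋯ 0`. Hence every
`A ∈ Δ_{n+2}^2` has first row and first column `1 1 0 ⋯ 0`, and the same argument applied to
the columns beyond the second shows that the second row is `1 1 0 ⋯ 0` if `a₂₂ = 1` and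
`1 0 1 0 ⋯ 0` if `a₂₂ = 0` (`a₂₂` is `A 1 1`, indices starting at `0`). In the first case
`A = J₂ ⊕ B` with `B ∈ Δ_n^2`. In the second, deleting the first row and column and setting the
new corner entry to `1` gives a matrix of `Δ_{n+1}^2`, and this is reversible. Prepending a row
`1 1 0 ⋯ 0` (or a zero column) does not affect whether the rows are sorted, because among words
with two ones `1 1 0 ⋯ 0` is the largest.
-/

open Function

lemma Fin.antitone_cons_iff {α : Type*} [Preorder α] {n : ℕ} {a : α} {f : Fin n → α} :
    Antitone (Fin.cons a f : Fin (n + 1) → α) ↔ (∀ i, f i ≤ a) ∧ Antitone f := by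
  refine ⟨fun h => ⟨fun i => ?_, fun i j hij => ?_⟩, fun ⟨ha, hf⟩ i j hij => ?_⟩
  · simpa using h (Fin.zero_le i.succ)
  · simpa using h (Fin.succ_le_succ_iff.2 hij)
  · induction j using Fin.cases with
    | zero => rw [nonpos_iff_eq_zero.1 hij]
    | succ j => induction i using Fin.cases with
      | zero => simpa using ha j
      | succ i => simpa using hf (Fin.succ_le_succ_iff.1 hij)

section Word
variable {m : ℕ}

def binVal (v : Fin m → Fin 2) : ℕ := ∑ j, (v j : ℕ) * 2 ^ (m - 1 - (j : ℕ))

def ones (v : Fin m → Fin 2) : ℕ := ∑ j, (v j : ℕ)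

def prefixOnes (m s : ℕ) : Fin m → Fin 2 := fun j => if (j : ℕ) < s then 1 else 0

@[simp]
lemma binVal_cons (a : Fin 2) (v : Fin m → Fin 2) :
    binVal (Fin.cons a v : Fin (m + 1) → Fin 2) = a * 2 ^ m + binVal v := by
  simp only [binVal, Fin.sum_univ_succ, Fin.cons_zero, Fin.cons_succ, Fin.val_zero, Fin.val_succ]
  congr 2 with j
  rw [show m + 1 - 1 - (j + 1) = m - 1 - j by omega]

@[simp]
lemma binVal_zero : binVal (0 : Fin m → Fin 2) = 0 := by
  simp [binVal]

@[simp]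
lemma ones_cons (a : Fin 2) (v : Fin m → Fin 2) :
    ones (Fin.cons a v : Fin (m + 1) → Fin 2) = a + ones v := by
  simp [ones, Fin.sum_univ_succ]

@[simp]
lemma ones_zero : ones (0 : Fin m → Fin 2) = 0 := by
  simp [ones]

@[simp]
lemma prefixOnes_zero : prefixOnes m 0 = 0 := by
  ext
  simp [prefixOnes]

@[simp]
lemma prefixOnes_succ_succ (s : ℕ) :
    prefixOnes (m + 1) (s + 1) = Fin.cons 1 (prefixOnes m s) := by
  ext j
  induction j using Fin.cases <;> simp [prefixOnes]

lemma ones_prefixOnes {s : ℕ} (hs : s ≤ m) : ones (prefixOnes m s) = s := by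
  induction m generalizing s with
  | zero => simp [ones, Nat.le_zero.1 hs]
  | succ m ih =>
    obtain _ | s := s
    · simp
    · simp [ih (Nat.le_of_succ_le_succ hs), add_comm]

lemma binVal_lt (v : Fin m → Fin 2) : binVal v < 2 ^ m := by
  induction v using Fin.consInduction with
  | elim0 => simp [binVal]
  | cons a v ih =>
    rw [binVal_cons, pow_succ]
    have := a.is_le
    nlinarith

lemma binVal_div (v : Fin (m + 1) → Fin 2) : binVal v / 2 ^ m = v 0 := by
  rw [← Fin.cons_self_tail v, binVal_cons, Nat.add_comm, Nat.add_mul_div_right _ _ (by positivity),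
    Nat.div_eq_of_lt (binVal_lt _), Nat.zero_add, Fin.cons_zero]

lemma binVal_le_prefixOnes {v : Fin m → Fin 2} {s : ℕ} (hv : ones v ≤ s) :
    binVal v ≤ binVal (prefixOnes m s) := by
  induction v using Fin.consInduction generalizing s with
  | elim0 => simp [binVal]
  | cons a v ih =>
    rw [ones_cons] at hv
    obtain _ | s := s
    · have ha : (a : ℕ) = 0 := by omega
      simpa [ha] using ih (s := 0) (by omega)
    · rw [prefixOnes_succ_succ, binVal_cons, binVal_cons]
      fin_cases a
      · simpa using (binVal_lt v).le.trans (Nat.le_add_right _ _)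
      · simp only [Fin.val_one, one_mul, add_le_add_iff_left]
        exact ih (by simp at hv; omega)

lemma eq_prefixOnes_of_antitone {v : Fin m → Fin 2} (hv : Antitone v) :
    v = prefixOnes m (ones v) := by
  induction v using Fin.consInduction with
  | elim0 => ext j; exact j.elim0
  | cons a v ih =>
    rw [Fin.antitone_cons_iff] at hv
    fin_cases a
    · obtain rfl : v = 0 := funext fun i => Fin.le_zero_iff.1 (hv.1 i)
      ext j
      induction j using Fin.cases <;> simp [prefixOnes]
    · rw [ones_cons]
      change Fin.cons 1 v = prefixOnes (_ + 1) (1 + ones v)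
      rw [Nat.add_comm 1, prefixOnes_succ_succ, ← ih hv.2]

end Word

section Sorted
variable {n m k : ℕ}

def SortedRows (k : ℕ) (A : Fin n → Fin m → Fin 2) : Prop :=
  Antitone (fun i => binVal (A i)) ∧ ∀ i, ones (A i) = k

lemma mem_DeltaSet_iff {A : Fin n → Fin n → Fin 2} :
    A ∈ DeltaSet n k ↔ SortedRows k A ∧ SortedRows k (swap A) :=
  ⟨fun ⟨⟨h1, h2⟩, h3, h4⟩ => ⟨⟨h1, h3⟩, h2, h4⟩, fun ⟨⟨h1, h3⟩, h2, h4⟩ => ⟨⟨h1, h2⟩, h3, h4⟩⟩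

lemma swap_mem_DeltaSet {A : Fin n → Fin n → Fin 2} (hA : A ∈ DeltaSet n k) :
    swap A ∈ DeltaSet n k :=
  (mem_DeltaSet_iff (A := swap A)).2 (mem_DeltaSet_iff.1 hA).symm

lemma sortedRows_cons_iff {r : Fin m → Fin 2} {R : Fin n → Fin m → Fin 2} :
    SortedRows k (Fin.cons r R : Fin (n + 1) → Fin m → Fin 2) ↔
      ones r = k ∧ (∀ i, binVal (R i) ≤ binVal r) ∧ SortedRows k R := by
  have hval : (fun i => binVal ((Fin.cons r R : Fin (n + 1) → Fin m → Fin 2) i)) =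
      Fin.cons (binVal r) fun i => binVal (R i) := by
    ext i; induction i using Fin.cases <;> simp
  simp only [SortedRows, hval, Fin.antitone_cons_iff, Fin.forall_fin_succ, Fin.cons_zero,
    Fin.cons_succ]
  tauto

lemma sortedRows_cons_prefixOnes_iff {R : Fin n → Fin m → Fin 2} (hk : k ≤ m) :
    SortedRows k (Fin.cons (prefixOnes m k) R : Fin (n + 1) → Fin m → Fin 2) ↔ SortedRows k R := by
  rw [sortedRows_cons_iff]
  exact ⟨fun h => h.2.2, fun h => ⟨ones_prefixOnes hk, fun i => binVal_le_prefixOnes (h.2 i).le, h⟩⟩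

lemma sortedRows_cons_zero_iff {R : Fin n → Fin m → Fin 2} :
    SortedRows k (fun i => Fin.cons 0 (R i) : Fin n → Fin (m + 1) → Fin 2) ↔ SortedRows k R := by
  simp [SortedRows]

lemma row_zero_eq_prefixOnes {A : Fin (n + 1) → Fin m → Fin 2}
    (h : Antitone fun j => binVal (swap A j)) : A 0 = prefixOnes m (ones (A 0)) :=
  eq_prefixOnes_of_antitone fun a b hab => by
    have := Nat.div_le_div_right (c := 2 ^ n) (h hab)
    rwa [binVal_div, binVal_div] at this

end Sorted

section Delta
variable {n : ℕ} {A : Fin (n + 2) → Fin (n + 2) → Fin 2}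

lemma row_zero_eq_of_mem_DeltaSet (hA : A ∈ DeltaSet (n + 2) 2) : A 0 = prefixOnes (n + 2) 2 := by
  obtain ⟨⟨-, hrow⟩, hcol, -⟩ := mem_DeltaSet_iff.1 hA
  rw [row_zero_eq_prefixOnes hcol, hrow]

lemma row_one_eq_of_mem_DeltaSet (hA : A ∈ DeltaSet (n + 2) 2) :
    A 1 = Fin.cons 1 (Fin.cons (A 1 1) (prefixOnes n (1 - A 1 1))) := by
  obtain ⟨⟨-, hrow⟩, hcol, -⟩ := mem_DeltaSet_iff.1 hA
  have h10 : A 1 0 = 1 := by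
    simpa using congrFun (row_zero_eq_of_mem_DeltaSet (swap_mem_DeltaSet hA)) 1
  set A' : Fin (n + 1) → Fin n → Fin 2 := fun i j => A i.succ j.succ.succ
  -- the columns beyond column 1 start with a zero, so they stay sorted without row 0
  have hcol' : Antitone fun j => binVal (swap A' j) := by
    have hcons : ∀ j : Fin n, swap A j.succ.succ = Fin.cons 0 (swap A' j) := fun j => by
      rw [← Fin.cons_self_tail (swap A j.succ.succ)]
      congr 1
      simpa using congrFun (row_zero_eq_of_mem_DeltaSet hA) j.succ.succ
    intro a b hab
    simpa [hcons] using hcol (Fin.succ_le_succ_iff.2 (Fin.succ_le_succ_iff.2 hab))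
  have hrow1 : A 1 = Fin.cons 1 (Fin.cons (A 1 1) (A' 0)) := by
    ext j
    induction j using Fin.cases with
    | zero => simp [h10]
    | succ j => induction j using Fin.cases <;> simp [A']
  have hones : ones (A' 0) = 1 - A 1 1 := by
    have := hrow 1
    rw [hrow1] at this
    simp only [ones_cons, Fin.coe_ofNat_eq_mod, Nat.mod_succ] at this
    omega
  conv_lhs => rw [hrow1]
  rw [row_zero_eq_prefixOnes hcol', hones]

end Delta

section Block
variable {k : ℕ}

def extendBlock (B : Fin k → Fin k → Fin 2) : Fin (k + 2) → Fin (k + 2) → Fin 2 :=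
  Fin.cons (prefixOnes (k + 2) 2) <|
    Fin.cons (prefixOnes (k + 2) 2) fun i => Fin.cons 0 (Fin.cons 0 (B i))

def trimBlock (A : Fin (k + 2) → Fin (k + 2) → Fin 2) : Fin k → Fin k → Fin 2 :=
  fun i j => A i.succ.succ j.succ.succ

lemma trimBlock_extendBlock (B : Fin k → Fin k → Fin 2) : trimBlock (extendBlock B) = B := rfl

lemma swap_extendBlock (B : Fin k → Fin k → Fin 2) :
    swap (extendBlock B) = extendBlock (swap B) := by
  simp only [funext_iff]
  simp [Fin.forall_fin_succ, extendBlock, swap]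

lemma sortedRows_extendBlock_iff {B : Fin k → Fin k → Fin 2} :
    SortedRows 2 (extendBlock B) ↔ SortedRows 2 B := by
  simp only [extendBlock, sortedRows_cons_prefixOnes_iff (Nat.le_add_left 2 k),
    sortedRows_cons_zero_iff]

lemma extendBlock_mem_iff {B : Fin k → Fin k → Fin 2} :
    extendBlock B ∈ DeltaSet (k + 2) 2 ↔ B ∈ DeltaSet k 2 := by
  rw [mem_DeltaSet_iff, mem_DeltaSet_iff, swap_extendBlock, sortedRows_extendBlock_iff,
    sortedRows_extendBlock_iff]

lemma extendBlock_trimBlock {A : Fin (k + 2) → Fin (k + 2) → Fin 2} (hA : A ∈ DeltaSet (k + 2) 2)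
    (h11 : A 1 1 = 1) : extendBlock (trimBlock A) = A := by
  have rows : ∀ A : Fin (k + 2) → Fin (k + 2) → Fin 2, A ∈ DeltaSet (k + 2) 2 → A 1 1 = 1 →
      A 0 = prefixOnes (k + 2) 2 ∧ A 1 = prefixOnes (k + 2) 2 := fun A hA h11 =>
    ⟨row_zero_eq_of_mem_DeltaSet hA, by simpa [h11] using row_one_eq_of_mem_DeltaSet hA⟩
  obtain ⟨r0, r1⟩ := rows A hA h11
  obtain ⟨c0, c1⟩ := rows (swap A) (swap_mem_DeltaSet hA) h11
  ext i j
  induction i using Fin.cases with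
  | zero => simp [extendBlock, r0]
  | succ i => induction i using Fin.cases with
    | zero => simp [extendBlock, r1]
    | succ i => induction j using Fin.cases with
      | zero =>
        have := congrFun c0 i.succ.succ
        simp_all [extendBlock, prefixOnes, swap]
      | succ j => induction j using Fin.cases with
        | zero =>
          have := congrFun c1 i.succ.succ
          simp_all [extendBlock, prefixOnes, swap]
        | succ j => rfl

lemma image_extendBlock :
    extendBlock '' DeltaSet k 2 = DeltaSet (k + 2) 2 ∩ {A | A 1 1 = 1} := by
  ext A
  constructor
  · rintro ⟨B, hB, rfl⟩
    exact ⟨extendBlock_mem_iff.2 hB, by simp [extendBlock]⟩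
  · rintro ⟨hA, h11⟩
    have h := extendBlock_trimBlock hA h11
    exact ⟨trimBlock A, extendBlock_mem_iff.1 (h ▸ hA), h⟩

lemma ncard_DeltaSet_inter_eq_deltaCard :
    (DeltaSet (k + 2) 2 ∩ {A | A 1 1 = 1}).ncard = deltaCard k 2 := by
  rw [← image_extendBlock,
    Set.ncard_image_of_injective _ (LeftInverse.injective trimBlock_extendBlock)]
  rfl

end Block

section Corner
variable {k : ℕ}

-- In block form, `extendCorner [[b, r], [c, B']] = [[1, 1, 0], [1, 0, r], [0, c, B']]`.
def extendCorner (B : Fin (k + 2) → Fin (k + 2) → Fin 2) : Fin (k + 3) → Fin (k + 3) → Fin 2 :=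
  Fin.cons (prefixOnes (k + 3) 2) <|
    Fin.cons (Fin.cons 1 (Fin.cons 0 (Fin.tail (B 0)))) fun i => Fin.cons 0 (B i.succ)

def trimCorner (A : Fin (k + 3) → Fin (k + 3) → Fin 2) : Fin (k + 2) → Fin (k + 2) → Fin 2 :=
  Fin.cons (prefixOnes (k + 2) 2) fun i => Fin.tail (A i.succ.succ)

lemma trimCorner_extendCorner {B : Fin (k + 2) → Fin (k + 2) → Fin 2}
    (h : B 0 = prefixOnes (k + 2) 2) : trimCorner (extendCorner B) = B := by
  conv_rhs => rw [← Fin.cons_self_tail B, h]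
  rfl

lemma swap_extendCorner (B : Fin (k + 2) → Fin (k + 2) → Fin 2) :
    swap (extendCorner B) = extendCorner (swap B) := by
  simp only [funext_iff, Fin.forall_fin_succ, extendCorner, swap, Fin.tail, Fin.cons_zero,
    Fin.cons_succ, prefixOnes_succ_succ, prefixOnes_zero, Pi.zero_apply]
  simp

lemma sortedRows_extendCorner_iff {B : Fin (k + 2) → Fin (k + 2) → Fin 2}
    (h : B 0 = prefixOnes (k + 2) 2) : SortedRows 2 (extendCorner B) ↔ SortedRows 2 B := by
  conv_rhs => rw [← Fin.cons_self_tail B, h, sortedRows_cons_prefixOnes_iff (by omega)]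
  rw [extendCorner, sortedRows_cons_prefixOnes_iff (by omega), sortedRows_cons_iff,
    sortedRows_cons_zero_iff]
  simp only [Fin.isValue, h, prefixOnes_succ_succ, prefixOnes_zero, Fin.tail_cons, ones_cons,
    Fin.coe_ofNat_eq_mod, Nat.mod_succ, Nat.zero_mod, ones_zero, add_zero, zero_add, Nat.reduceAdd,
    binVal_cons, zero_mul, one_mul, binVal_zero, true_and]
  exact and_iff_right fun i => (binVal_lt _).le.trans (Nat.le_add_right _ _)

lemma extendCorner_mem_iff {B : Fin (k + 2) → Fin (k + 2) → Fin 2}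
    (h : B 0 = prefixOnes (k + 2) 2) (h' : swap B 0 = prefixOnes (k + 2) 2) :
    extendCorner B ∈ DeltaSet (k + 3) 2 ↔ B ∈ DeltaSet (k + 2) 2 := by
  rw [mem_DeltaSet_iff, mem_DeltaSet_iff, swap_extendCorner, sortedRows_extendCorner_iff h,
    sortedRows_extendCorner_iff h']

lemma extendCorner_trimCorner {A : Fin (k + 3) → Fin (k + 3) → Fin 2}
    (hA : A ∈ DeltaSet (k + 3) 2) (h11 : A 1 1 = 0) : extendCorner (trimCorner A) = A := by
  have r0 := row_zero_eq_of_mem_DeltaSet hA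
  have r1 : A 1 = Fin.cons 1 (Fin.cons 0 (prefixOnes (k + 1) 1)) := by
    simpa [h11] using row_one_eq_of_mem_DeltaSet hA
  have c0 := row_zero_eq_of_mem_DeltaSet (swap_mem_DeltaSet hA)
  ext i j
  induction i using Fin.cases with
  | zero => simp [extendCorner, r0]
  | succ i => induction i using Fin.cases with
    | zero => simp [extendCorner, trimCorner, r1]
    | succ i => induction j using Fin.cases with
      | zero =>
        have := congrFun c0 i.succ.succ
        simp_all [extendCorner, prefixOnes, swap]
      | succ j => rfl

lemma swap_trimCorner_zero {A : Fin (k + 3) → Fin (k + 3) → Fin 2}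
    (hA : A ∈ DeltaSet (k + 3) 2) (h11 : A 1 1 = 0) :
    swap (trimCorner A) 0 = prefixOnes (k + 2) 2 := by
  have c1 : swap A 1 = Fin.cons 1 (Fin.cons 0 (prefixOnes (k + 1) 1)) := by
    simpa [h11] using row_one_eq_of_mem_DeltaSet (swap_mem_DeltaSet hA)
  ext i
  induction i using Fin.cases with
  | zero => rfl
  | succ i =>
    have := congrFun c1 i.succ.succ
    simp_all [trimCorner, swap, Fin.tail]

lemma image_extendCorner :
    extendCorner '' DeltaSet (k + 2) 2 = DeltaSet (k + 3) 2 \ {A | A 1 1 = 1} := by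
  ext A
  constructor
  · rintro ⟨B, hB, rfl⟩
    exact ⟨(extendCorner_mem_iff (row_zero_eq_of_mem_DeltaSet hB)
      (row_zero_eq_of_mem_DeltaSet (swap_mem_DeltaSet hB))).2 hB, by simp [extendCorner]⟩
  · rintro ⟨hA, h11 : A 1 1 ≠ 1⟩
    have h11 : A 1 1 = 0 := by lia
    have h := extendCorner_trimCorner hA h11
    exact ⟨trimCorner A, (extendCorner_mem_iff rfl (swap_trimCorner_zero hA h11)).1 (h ▸ hA), h⟩

lemma ncard_DeltaSet_diff_eq_deltaCard :
    (DeltaSet (k + 3) 2 \ {A | A 1 1 = 1}).ncard = deltaCard (k + 2) 2 := by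
  rw [← image_extendCorner, Set.InjOn.ncard_image
    (Set.LeftInvOn.injOn fun B hB => trimCorner_extendCorner (row_zero_eq_of_mem_DeltaSet hB))]
  rfl

end Corner

/-- Theorem: `δ(n+2,2) = δ(n+1,2) + δ(n,2)` for all `n ≥ 2`. -/
theorem delta_two_fib_recurrence (n : ℕ) (hn : 2 ≤ n) :
    deltaCard (n + 2) 2 = deltaCard (n + 1) 2 + deltaCard n 2 := by
  obtain ⟨k, rfl⟩ : ∃ k, n = k + 1 := ⟨n - 1, by omega⟩
  rw [deltaCard, ← Set.ncard_inter_add_ncard_sdiff_eq_ncard _ {A | A 1 1 = 1},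
    ncard_DeltaSet_inter_eq_deltaCard, ncard_DeltaSet_diff_eq_deltaCard, add_comm]
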